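/- Let A be an m×n real matrix with nonzero columns, γ ≥ 1, and k a natural number with k < (1/2)(1 + 1/μ(A)). If x, x' ∈ ℝ^{nγ} are both k-sparse and (A ⊗ ε_γ^T) x = (A ⊗ ε_γ^T) x', then their block-sum vectors agree: x^γ = x'^γ. -/

import Mathlib

noncomputable section
open Matrix ENNReal

/-- The matrix `A ⊗ ε_γᵀ` (each column of `A` repeated `γ` consecutive times,
scaled by `1/√γ`), with the column index set `Fin n × Fin γ` flattened to `Fin (n·γ)`. -/
def kronEpsT {m n : ℕ} (A : Matrix (Fin m) (Fin n) ℝ) (γ : ℕ) :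
    Matrix (Fin m) (Fin (n * γ)) ℝ :=
  Matrix.of fun i k =>
    A i ⟨(k : ℕ) / γ, by
      have hk := k.isLt
      rcases Nat.eq_zero_or_pos γ with h | h
      · subst h; exact absurd hk (by simp)
      · exact (Nat.div_lt_iff_lt_mul h).2 hk⟩ * (Real.sqrt (γ : ℝ))⁻¹

/-- The block-sum vector `x^γ ∈ ℝⁿ` of `x ∈ ℝ^{nγ}`:
`(x^γ)_j` is the sum of the `j`-th block of `γ` consecutive entries of `x`. -/
def blockSum {n γ : ℕ} (x : Fin (n * γ) → ℝ) : Fin n → ℝ :=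
  fun j => ∑ i : Fin γ, x (finProdFinEquiv (j, i))

/-- The block-average expansion `x̄ ∈ ℝ^{nγ}`: every entry in the `j`-th block of `γ`
consecutive entries is replaced by the block average `(x^γ)_j / γ`. -/
def blockAvg {n γ : ℕ} (x : Fin (n * γ) → ℝ) : Fin (n * γ) → ℝ :=
  fun k => blockSum x (finProdFinEquiv.symm k).1 / (γ : ℝ)

/-- The spark of `A`: the smallest number of columns of `A` that form a linearly
dependent set (`⊤` if all sets of columns are linearly independent).  Equivalently,
the minimal size of the support of a nonzero vector in the kernel of `A`. -/
def spark {m n : ℕ} (A : Matrix (Fin m) (Fin n) ℝ) : ℕ∞ :=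
  sInf {c : ℕ∞ | ∃ v : Fin n → ℝ, v ≠ 0 ∧ A.mulVec v = 0 ∧
    c = ((Function.support v).ncard : ℕ∞)}

/-- The mutual coherence `μ(A)`: the largest normalized absolute inner product
between two distinct columns of `A`. -/
def coherence {m n : ℕ} (A : Matrix (Fin m) (Fin n) ℝ) : ℝ :=
  sSup {r : ℝ | ∃ i j : Fin n, i ≠ j ∧
    r = |∑ t, A t i * A t j| /
      (Real.sqrt (∑ t, A t i ^ 2) * Real.sqrt (∑ t, A t j ^ 2))}

/-- `A` satisfies the restricted isometry property of order `s` with constant `δ`. -/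
def RIP {m n : ℕ} (A : Matrix (Fin m) (Fin n) ℝ) (s : ℕ) (δ : ℝ) : Prop :=
  ∀ v : Fin n → ℝ, (Function.support v).ncard ≤ s →
    (1 - δ) * (∑ j, v j ^ 2) ≤ (∑ i, (A.mulVec v) i ^ 2) ∧
    (∑ i, (A.mulVec v) i ^ 2) ≤ (1 + δ) * (∑ j, v j ^ 2)

/-!
Equal measurements force `A (x^γ - x'^γ) = 0`, because `(A ⊗ ε_γᵀ) x = γ^{-1/2} A x^γ`, and
`x^γ - x'^γ` has at most `2k` nonzero entries, since taking block sums cannot enlarge a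
support. On the other hand every nonzero `v` with `A v = 0` has at least `1 + 1/μ(A)` nonzero
entries: in the row of the Gram equation `AᵀA v = 0` at the index maximising `‖a_i‖ |v_i|`,
the diagonal term `‖a_i‖² |v_i|` is cancelled by the at most `|supp v| - 1` nonzero
off-diagonal terms, each of size at most `μ(A) ‖a_i‖ · ‖a_i‖ |v_i|`. As `2k < 1 + 1/μ(A)`, the difference vanishes.
-/

open Finset Function

section Coherence

variable {m n : ℕ} (A : Matrix (Fin m) (Fin n) ℝ)

def colNorm (j : Fin n) : ℝ := √(∑ t, A t j ^ 2)

lemma colNorm_pos (hA : ∀ j : Fin n, (fun i => A i j) ≠ 0) (j : Fin n) : 0 < colNorm A j := by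
  obtain ⟨t, ht⟩ := Function.ne_iff.1 (hA j)
  exact Real.sqrt_pos.2 <| sum_pos' (fun _ _ => sq_nonneg _) ⟨t, mem_univ t, sq_pos_of_ne_zero ht⟩

lemma abs_sum_mul_le_colNorm_mul (i j : Fin n) :
    |∑ t, A t i * A t j| ≤ colNorm A i * colNorm A j := by
  refine abs_le.2 ⟨neg_le.2 ?_, Real.sum_mul_le_sqrt_mul_sqrt _ _ _⟩
  simpa [colNorm] using Real.sum_mul_le_sqrt_mul_sqrt univ (fun t => A t i) (fun t => -A t j)

lemma coherence_nonneg : 0 ≤ coherence A := by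
  apply Real.sSup_nonneg
  rintro _ ⟨i, j, -, rfl⟩
  positivity

lemma abs_sum_mul_le_coherence_mul (hA : ∀ j : Fin n, (fun i => A i j) ≠ 0) {i j : Fin n}
    (hij : i ≠ j) : |∑ t, A t i * A t j| ≤ coherence A * (colNorm A i * colNorm A j) := by
  have hN : 0 < colNorm A i * colNorm A j := mul_pos (colNorm_pos A hA i) (colNorm_pos A hA j)
  have hbdd : BddAbove {r : ℝ | ∃ i j : Fin n, i ≠ j ∧
      r = |∑ t, A t i * A t j| / (colNorm A i * colNorm A j)} := by
    refine ⟨1, fun r ⟨a, b, _, hr⟩ => hr ▸ div_le_one_of_le₀ (abs_sum_mul_le_colNorm_mul A a b)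
      (mul_nonneg (Real.sqrt_nonneg _) (Real.sqrt_nonneg _))⟩
  rw [← div_le_iff₀ hN]
  exact le_csSup hbdd ⟨i, j, hij, rfl⟩

lemma colNorm_sq_mul_abs_le_of_mulVec_eq_zero (hA : ∀ j : Fin n, (fun i => A i j) ≠ 0)
    {v : Fin n → ℝ} (hv : A *ᵥ v = 0) (i : Fin n) :
    colNorm A i ^ 2 * |v i| ≤
      coherence A * colNorm A i * ∑ j ∈ univ.erase i, colNorm A j * |v j| := by
  have hrow (t : Fin m) : ∑ j, A t j * v j = 0 := congrFun hv t
  have hgram : ∑ j, (∑ t, A t i * A t j) * v j = 0 := by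
    calc ∑ j, (∑ t, A t i * A t j) * v j = ∑ t, A t i * ∑ j, A t j * v j := by
          simp only [Finset.sum_mul, Finset.mul_sum, mul_assoc]
          exact Finset.sum_comm
      _ = 0 := by simp only [hrow, mul_zero, sum_const_zero]
  have hdiag : colNorm A i ^ 2 = ∑ t, A t i * A t i := by
    rw [colNorm, Real.sq_sqrt (by positivity)]
    simp only [sq]
  rw [← add_sum_erase _ _ (mem_univ i), ← hdiag] at hgram
  calc colNorm A i ^ 2 * |v i| = |∑ j ∈ univ.erase i, (∑ t, A t i * A t j) * v j| := by
        rw [← abs_of_nonneg (sq_nonneg (colNorm A i)), ← abs_mul,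
          eq_neg_of_add_eq_zero_left hgram, abs_neg]
    _ ≤ ∑ j ∈ univ.erase i, |∑ t, A t i * A t j| * |v j| :=
        (abs_sum_le_sum_abs _ _).trans_eq (by simp only [abs_mul])
    _ ≤ ∑ j ∈ univ.erase i, coherence A * (colNorm A i * colNorm A j) * |v j| := by
        gcongr with j hj
        exact abs_sum_mul_le_coherence_mul A hA (ne_of_mem_erase hj).symm
    _ = _ := by
        rw [Finset.mul_sum]
        exact sum_congr rfl fun j _ => by ring

lemma one_le_coherence_mul_of_mulVec_eq_zero (hA : ∀ j : Fin n, (fun i => A i j) ≠ 0)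
    {v : Fin n → ℝ} (hv : A *ᵥ v = 0) (hv0 : v ≠ 0) :
    1 ≤ coherence A * ((support v).ncard - 1 : ℝ) := by
  classical
  set w : Fin n → ℝ := fun j => colNorm A j * |v j|
  set T := univ.filter (v · ≠ 0)
  have hT : (support v).ncard = T.card := by
    rw [← Set.ncard_coe_finset, coe_filter]
    simp [support]
  obtain ⟨i, hiT, hmax⟩ := T.exists_max_image w <| by
    obtain ⟨j, hj⟩ := Function.ne_iff.1 hv0
    exact ⟨j, mem_filter.2 ⟨mem_univ j, hj⟩⟩
  have hNi := colNorm_pos A hA i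
  have hwi : 0 < w i := mul_pos hNi (abs_pos.2 (mem_filter.1 hiT).2)
  have hoff : ∑ j ∈ univ.erase i, w j = ∑ j ∈ T.erase i, w j := by
    rw [← filter_erase, sum_filter_of_ne]
    intro j _ hwj hvj
    exact hwj (by simp [w, hvj])
  have hcount : ∑ j ∈ T.erase i, w j ≤ (T.card - 1 : ℝ) * w i := by
    have := sum_le_card_nsmul (T.erase i) w (w i) fun j hj => hmax j (mem_of_mem_erase hj)
    rwa [card_erase_of_mem hiT, nsmul_eq_mul, Nat.cast_sub (card_pos.2 ⟨i, hiT⟩),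
      Nat.cast_one] at this
  have hdom := colNorm_sq_mul_abs_le_of_mulVec_eq_zero A hA hv i
  rw [hoff] at hdom
  refine le_of_mul_le_mul_left ?_ (mul_pos hNi hwi)
  calc colNorm A i * w i * 1 = colNorm A i ^ 2 * |v i| := by ring
    _ ≤ coherence A * colNorm A i * ((T.card - 1 : ℝ) * w i) :=
        hdom.trans (by gcongr; exact mul_nonneg (coherence_nonneg A) hNi.le)
    _ = _ := by rw [hT]; ring

lemma one_add_inv_coherence_le_ncard_support (hA : ∀ j : Fin n, (fun i => A i j) ≠ 0)
    {v : Fin n → ℝ} (hv : A *ᵥ v = 0) (hv0 : v ≠ 0) :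
    1 + 1 / coherence A ≤ (support v).ncard := by
  have h := one_le_coherence_mul_of_mulVec_eq_zero A hA hv hv0
  have hμ : 0 < coherence A := (coherence_nonneg A).lt_of_ne fun h0 => by
    rw [← h0, zero_mul] at h
    exact one_pos.not_ge h
  have : 1 / coherence A ≤ (support v).ncard - 1 := by
    rw [div_le_iff₀ hμ]
    linarith
  linarith

end Coherence

section BlockSum

variable {n γ : ℕ}

lemma support_blockSum_subset (x : Fin (n * γ) → ℝ) :
    support (blockSum x) ⊆ (fun k => (finProdFinEquiv.symm k).1) '' support x := by
  intro j hj
  obtain ⟨t, -, ht⟩ := exists_ne_zero_of_sum_ne_zero hj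
  exact ⟨finProdFinEquiv (j, t), ht, by simp⟩

lemma ncard_support_blockSum_le (x : Fin (n * γ) → ℝ) :
    (support (blockSum x)).ncard ≤ (support x).ncard :=
  (Set.ncard_le_ncard (support_blockSum_subset x)).trans (Set.ncard_image_le (Set.toFinite _))

variable {m : ℕ} (A : Matrix (Fin m) (Fin n) ℝ)

lemma kronEpsT_apply_finProdFinEquiv (i : Fin m) (j : Fin n) (t : Fin γ) :
    kronEpsT A γ i (finProdFinEquiv (j, t)) = A i j * (√γ)⁻¹ := by
  simp only [kronEpsT, Matrix.of_apply]
  congr 2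
  ext
  show ((t : ℕ) + γ * j) / γ = j
  rw [Nat.add_mul_div_left _ _ t.pos, Nat.div_eq_of_lt t.isLt, zero_add]

lemma kronEpsT_mulVec (x : Fin (n * γ) → ℝ) :
    kronEpsT A γ *ᵥ x = (√γ)⁻¹ • (A *ᵥ blockSum x) := by
  ext i
  rw [Pi.smul_apply, smul_eq_mul, mulVec, dotProduct, ← finProdFinEquiv.sum_comp,
    Fintype.sum_prod_type, mulVec, dotProduct, Finset.mul_sum]
  refine sum_congr rfl fun j _ => ?_
  rw [blockSum, Finset.mul_sum, Finset.mul_sum]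
  refine sum_congr rfl fun t _ => ?_
  rw [kronEpsT_apply_finProdFinEquiv]
  ring

lemma mulVec_blockSum_eq_of_kronEpsT_mulVec_eq {x x' : Fin (n * γ) → ℝ}
    (h : kronEpsT A γ *ᵥ x = kronEpsT A γ *ᵥ x') : A *ᵥ blockSum x = A *ᵥ blockSum x' := by
  rcases Nat.eq_zero_or_pos γ with rfl | hγ
  · exact congrArg _ (funext fun j => by simp [blockSum])
  · rw [kronEpsT_mulVec, kronEpsT_mulVec] at h
    exact smul_right_injective _ (inv_ne_zero (Real.sqrt_pos.2 (Nat.cast_pos.2 hγ)).ne') h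

end BlockSum

theorem coherence_measurement_determines_blockSum_general {m n γ k : ℕ}
    (A : Matrix (Fin m) (Fin n) ℝ) (hA : ∀ j : Fin n, (fun i => A i j) ≠ 0)
    (hk : (k : ℝ) < (1 / 2) * (1 + 1 / coherence A))
    (x x' : Fin (n * γ) → ℝ)
    (hx : (Function.support x).ncard ≤ k) (hx' : (Function.support x').ncard ≤ k)
    (h : (kronEpsT A γ).mulVec x = (kronEpsT A γ).mulVec x') :
    blockSum x = blockSum x' := by
  by_contra hne
  have hker : A *ᵥ (blockSum x - blockSum x') = 0 := by
    rw [mulVec_sub, sub_eq_zero]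
    exact mulVec_blockSum_eq_of_kronEpsT_mulVec_eq A h
  have hsparse : (support (blockSum x - blockSum x')).ncard ≤ 2 * k :=
    calc (support (blockSum x - blockSum x')).ncard
        ≤ (support (blockSum x)).ncard + (support (blockSum x')).ncard :=
          (Set.ncard_le_ncard (support_sub _ _)).trans (Set.ncard_union_le _ _)
      _ ≤ 2 * k := by
          linarith [ncard_support_blockSum_le x, ncard_support_blockSum_le x', hx, hx']
  have hdense := one_add_inv_coherence_le_ncard_support A hA hker (sub_ne_zero.2 hne)
  have hsparse' : ((support (blockSum x - blockSum x')).ncard : ℝ) ≤ 2 * k := by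
    exact_mod_cast hsparse
  linarith

/-- If `k < (1/2)(1 + 1/μ(A))`, the DK-STP measurement `(A ⊗ ε_γᵀ) x`
determines the block-sum vector `x^γ` of any `k`-sparse `x`. -/
theorem coherence_measurement_determines_blockSum {m n γ k : ℕ} (hγ : 1 ≤ γ)
    (A : Matrix (Fin m) (Fin n) ℝ) (hA : ∀ j : Fin n, (fun i => A i j) ≠ 0)
    (hμ : 0 < coherence A)
    (hk : (k : ℝ) < (1 / 2) * (1 + 1 / coherence A))
    (x x' : Fin (n * γ) → ℝ)
    (hx : (Function.support x).ncard ≤ k) (hx' : (Function.support x').ncard ≤ k)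
    (h : (kronEpsT A γ).mulVec x = (kronEpsT A γ).mulVec x') :
    blockSum x = blockSum x' :=
  coherence_measurement_determines_blockSum_general A hA hk x x' hx hx' h
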